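/- Consider the two-step scalar control system x₁ = x₀ + u₀ + w₀u₀, x₂ = x₁ + u₁ + w₁u₁, where w₀, w₁ are independent real random variables with E[wᵢ] = 0 and E[wᵢ²] = 1, x₀ ∈ L²(Ω;ℝ) is independent of (w₀, w₁), and the cost is J(x₀,u) = E[x₂² − 2u₀² − 2u₁²]. Then for every S ∈ ℝ, the linear feedback control ū₀ = S·x₀, ū₁ = S·x₁ satisfies J(x₀,ū) = (4S³ + 4S² + 4S + 1)·E[x₀²]. In particular, if S ∈ ℝ satisfies 4S³ + 4S² + 4S + 1 = 0, then J(x₀,ū) = 0, whereas the zero control u ≡ 0 gives J(x₀,0) = E[x₀²]; hence if E[x₀²] > 0 then J(x₀,ū) < J(x₀,0). -/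

import Mathlib

/-!
Under the feedback `u = S x` each step multiplies the state by `1 + S + S w`, so the cost
integrand is `x₀² · F(w₀, w₁)` with `F(a, b) = g(a) g(b) − 2S² − 2S² g(a)` and
`g(a) = (1 + S + S a)²`. Independence of `x₀` from the noises splits the cost into
`E[x₀²] · E[F(w₀, w₁)]`. A standardized noise has `E[g(w)] = (1 + S)² + S² = 1 + 2S + 2S²`, and
independence of `w₀, w₁` then gives
`E[F(w₀, w₁)] = (1 + 2S + 2S²)² − 2S² − 2S²(1 + 2S + 2S²) = 4S³ + 4S² + 4S + 1`.
-/

open MeasureTheory ProbabilityTheory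

namespace SLQExample

variable {Ω : Type} [MeasurableSpace Ω]

/-- First state `x₁ = x₀ + u₀ + w₀ u₀`. -/
def x1 (w0 x0 u0 : Ω → ℝ) : Ω → ℝ := fun ω => x0 ω + u0 ω + w0 ω * u0 ω

/-- Second state `x₂ = x₁ + u₁ + w₁ u₁`. -/
def x2 (w0 w1 x0 u0 u1 : Ω → ℝ) : Ω → ℝ :=
  fun ω => x1 w0 x0 u0 ω + u1 ω + w1 ω * u1 ω

/-- Cost `J(x₀, u) = E[x₂² − 2u₀² − 2u₁²]`. -/
noncomputable def J (μ : Measure Ω) (w0 w1 x0 u0 u1 : Ω → ℝ) : ℝ :=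
  ∫ ω, ((x2 w0 w1 x0 u0 u1 ω) ^ 2 - 2 * (u0 ω) ^ 2 - 2 * (u1 ω) ^ 2) ∂μ

end SLQExample

section SecondMoments

variable {Ω : Type*} [MeasurableSpace Ω] {μ : Measure Ω} {w : Ω → ℝ}

lemma memLp_two_of_integral_sq_eq_one (hw : AEStronglyMeasurable w μ)
    (h : ∫ ω, w ω ^ 2 ∂μ = 1) : MemLp w 2 μ :=
  (memLp_two_iff_integrable_sq hw).2 (integrable_of_integral_eq_one h)

lemma integrable_add_mul_sq [IsFiniteMeasure μ] (hw : MemLp w 2 μ) (a b : ℝ) :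
    Integrable (fun ω => (a + b * w ω) ^ 2) μ :=
  ((memLp_const a).add (hw.const_mul b)).integrable_sq

lemma integral_add_mul_sq [IsProbabilityMeasure μ] (hw : MemLp w 2 μ) (a b : ℝ) :
    ∫ ω, (a + b * w ω) ^ 2 ∂μ
      = a ^ 2 + 2 * a * b * ∫ ω, w ω ∂μ + b ^ 2 * ∫ ω, w ω ^ 2 ∂μ := by
  have hw1 : Integrable w μ := hw.integrable one_le_two
  have hexpand : (fun ω => (a + b * w ω) ^ 2)
      = fun ω => a ^ 2 + (2 * a * b * w ω + b ^ 2 * w ω ^ 2) := by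
    ext ω; ring
  rw [hexpand, integral_add (integrable_const _)
      ((hw1.const_mul _).fun_add (hw.integrable_sq.const_mul _)),
    integral_add (hw1.const_mul _) (hw.integrable_sq.const_mul _),
    integral_const_mul, integral_const_mul, integral_const, probReal_univ, one_smul]
  ring

end SecondMoments

namespace SLQExample

def feedbackCostFactor (S : ℝ) (w : ℝ × ℝ) : ℝ :=
  (1 + S + S * w.1) ^ 2 * (1 + S + S * w.2) ^ 2 - 2 * S ^ 2 - 2 * S ^ 2 * (1 + S + S * w.1) ^ 2

lemma measurable_feedbackCostFactor (S : ℝ) : Measurable (feedbackCostFactor S) := by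
  unfold feedbackCostFactor; fun_prop

variable {Ω : Type}

lemma x1_feedback (w0 x0 : Ω → ℝ) (S : ℝ) :
    x1 w0 x0 (fun ω => S * x0 ω) = fun ω => (1 + S + S * w0 ω) * x0 ω := by
  ext ω; simp only [x1]; ring

variable [MeasurableSpace Ω]

lemma J_feedback_eq_mul_integral_feedbackCostFactor (μ : Measure Ω) (w0 w1 x0 : Ω → ℝ)
    (hw0 : Measurable w0) (hw1 : Measurable w1) (hx0 : Measurable x0)
    (hindx : IndepFun x0 (fun ω => (w0 ω, w1 ω)) μ) (S : ℝ) :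
    J μ w0 w1 x0 (fun ω => S * x0 ω) (fun ω => S * x1 w0 x0 (fun ω' => S * x0 ω') ω)
      = (∫ ω, x0 ω ^ 2 ∂μ) * ∫ ω, feedbackCostFactor S (w0 ω, w1 ω) ∂μ := by
  have hintegrand : ∀ ω,
      x2 w0 w1 x0 (fun ω => S * x0 ω) (fun ω => S * x1 w0 x0 (fun ω' => S * x0 ω') ω) ω ^ 2
        - 2 * (S * x0 ω) ^ 2 - 2 * (S * x1 w0 x0 (fun ω' => S * x0 ω') ω) ^ 2
      = x0 ω ^ 2 * feedbackCostFactor S (w0 ω, w1 ω) := by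
    intro ω
    simp only [x2, x1_feedback, feedbackCostFactor]
    ring
  have hind : IndepFun (fun ω => x0 ω ^ 2) (fun ω => feedbackCostFactor S (w0 ω, w1 ω)) μ :=
    hindx.comp (measurable_id.pow_const 2) (measurable_feedbackCostFactor S)
  simp only [J, hintegrand]
  exact hind.integral_fun_mul_eq_mul_integral (hx0.pow_const 2).aestronglyMeasurable
    ((measurable_feedbackCostFactor S).comp (hw0.prodMk hw1)).aestronglyMeasurable

lemma integral_feedbackCostFactor (μ : Measure Ω) [IsProbabilityMeasure μ] (w0 w1 : Ω → ℝ)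
    (hw0 : MemLp w0 2 μ) (hw1 : MemLp w1 2 μ) (hindw : IndepFun w0 w1 μ)
    (hw0mean : ∫ ω, w0 ω ∂μ = 0) (hw1mean : ∫ ω, w1 ω ∂μ = 0)
    (hw0var : ∫ ω, w0 ω ^ 2 ∂μ = 1) (hw1var : ∫ ω, w1 ω ^ 2 ∂μ = 1) (S : ℝ) :
    ∫ ω, feedbackCostFactor S (w0 ω, w1 ω) ∂μ = 4 * S ^ 3 + 4 * S ^ 2 + 4 * S + 1 := by
  set g : ℝ → ℝ := fun a => (1 + S + S * a) ^ 2
  have hg : Measurable g := by fun_prop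
  have hg0 : Integrable (fun ω => g (w0 ω)) μ := integrable_add_mul_sq hw0 _ _
  have hg1 : Integrable (fun ω => g (w1 ω)) μ := integrable_add_mul_sq hw1 _ _
  have hEg0 : ∫ ω, g (w0 ω) ∂μ = 1 + 2 * S + 2 * S ^ 2 := by
    simp only [g, integral_add_mul_sq hw0, hw0mean, hw0var]; ring
  have hEg1 : ∫ ω, g (w1 ω) ∂μ = 1 + 2 * S + 2 * S ^ 2 := by
    simp only [g, integral_add_mul_sq hw1, hw1mean, hw1var]; ring
  have hind : IndepFun (fun ω => g (w0 ω)) (fun ω => g (w1 ω)) μ := hindw.comp hg hg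
  have hEprod : ∫ ω, g (w0 ω) * g (w1 ω) ∂μ = (1 + 2 * S + 2 * S ^ 2) ^ 2 := by
    rw [hind.integral_fun_mul_eq_mul_integral hg0.aestronglyMeasurable hg1.aestronglyMeasurable,
      hEg0, hEg1]
    ring
  have hprod : Integrable (fun ω => g (w0 ω) * g (w1 ω)) μ := hind.integrable_mul hg0 hg1
  change ∫ ω, (g (w0 ω) * g (w1 ω) - 2 * S ^ 2 - 2 * S ^ 2 * g (w0 ω)) ∂μ = _
  rw [integral_sub (f := fun ω => g (w0 ω) * g (w1 ω) - 2 * S ^ 2)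
      (hprod.sub (integrable_const _)) (hg0.const_mul _),
    integral_sub hprod (integrable_const _), integral_const, probReal_univ, one_smul,
    integral_const_mul, hEprod, hEg0]
  ring

lemma J_zero (μ : Measure Ω) (w0 w1 x0 : Ω → ℝ) :
    J μ w0 w1 x0 (fun _ => 0) (fun _ => 0) = ∫ ω, x0 ω ^ 2 ∂μ := by
  simp [J, x2, x1]

theorem statement_0_general
    (μ : Measure Ω) [IsProbabilityMeasure μ]
    (w0 w1 x0 : Ω → ℝ)
    (hw0m : Measurable w0) (hw1m : Measurable w1) (hx0m : Measurable x0)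
    (hindw : IndepFun w0 w1 μ)
    (hindx : IndepFun x0 (fun ω => (w0 ω, w1 ω)) μ)
    (hw0mean : ∫ ω, w0 ω ∂μ = 0) (hw1mean : ∫ ω, w1 ω ∂μ = 0)
    (hw0var : ∫ ω, (w0 ω) ^ 2 ∂μ = 1) (hw1var : ∫ ω, (w1 ω) ^ 2 ∂μ = 1)
    (S : ℝ) :
    -- the feedback control ū₀ = S x₀, ū₁ = S x₁
    J μ w0 w1 x0 (fun ω => S * x0 ω) (fun ω => S * x1 w0 x0 (fun ω' => S * x0 ω') ω)
      = (4 * S ^ 3 + 4 * S ^ 2 + 4 * S + 1) * ∫ ω, (x0 ω) ^ 2 ∂μ ∧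
    -- if S is a root of 4S³+4S²+4S+1 = 0, the cost of the feedback control vanishes
    (4 * S ^ 3 + 4 * S ^ 2 + 4 * S + 1 = 0 →
      J μ w0 w1 x0 (fun ω => S * x0 ω) (fun ω => S * x1 w0 x0 (fun ω' => S * x0 ω') ω) = 0) ∧
    -- the zero control has cost E[x₀²]
    J μ w0 w1 x0 (fun _ => 0) (fun _ => 0) = ∫ ω, (x0 ω) ^ 2 ∂μ ∧
    -- hence the feedback control strictly beats the zero control when E[x₀²] > 0
    (4 * S ^ 3 + 4 * S ^ 2 + 4 * S + 1 = 0 → 0 < ∫ ω, (x0 ω) ^ 2 ∂μ →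
      J μ w0 w1 x0 (fun ω => S * x0 ω) (fun ω => S * x1 w0 x0 (fun ω' => S * x0 ω') ω)
        < J μ w0 w1 x0 (fun _ => 0) (fun _ => 0)) := by
  have hw0 := memLp_two_of_integral_sq_eq_one hw0m.aestronglyMeasurable hw0var
  have hw1 := memLp_two_of_integral_sq_eq_one hw1m.aestronglyMeasurable hw1var
  have hfeedback : J μ w0 w1 x0 (fun ω => S * x0 ω)
      (fun ω => S * x1 w0 x0 (fun ω' => S * x0 ω') ω)
      = (4 * S ^ 3 + 4 * S ^ 2 + 4 * S + 1) * ∫ ω, x0 ω ^ 2 ∂μ := by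
    rw [J_feedback_eq_mul_integral_feedbackCostFactor μ w0 w1 x0 hw0m hw1m hx0m hindx,
      integral_feedbackCostFactor μ w0 w1 hw0 hw1 hindw hw0mean hw1mean hw0var hw1var, mul_comm]
  refine ⟨hfeedback, fun hroot => by rw [hfeedback, hroot, zero_mul], J_zero μ w0 w1 x0,
    fun hroot hpos => ?_⟩
  rwa [hfeedback, hroot, zero_mul, J_zero]

theorem statement_0
    (μ : Measure Ω) [IsProbabilityMeasure μ]
    (w0 w1 x0 : Ω → ℝ)
    (hw0m : Measurable w0) (hw1m : Measurable w1) (hx0m : Measurable x0)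
    (hindw : IndepFun w0 w1 μ)
    (hindx : IndepFun x0 (fun ω => (w0 ω, w1 ω)) μ)
    (hw0mean : ∫ ω, w0 ω ∂μ = 0) (hw1mean : ∫ ω, w1 ω ∂μ = 0)
    (hw0var : ∫ ω, (w0 ω) ^ 2 ∂μ = 1) (hw1var : ∫ ω, (w1 ω) ^ 2 ∂μ = 1)
    (hx0L2 : MemLp x0 2 μ)
    (S : ℝ) :
    -- the feedback control ū₀ = S x₀, ū₁ = S x₁
    J μ w0 w1 x0 (fun ω => S * x0 ω) (fun ω => S * x1 w0 x0 (fun ω' => S * x0 ω') ω)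
      = (4 * S ^ 3 + 4 * S ^ 2 + 4 * S + 1) * ∫ ω, (x0 ω) ^ 2 ∂μ ∧
    -- if S is a root of 4S³+4S²+4S+1 = 0, the cost of the feedback control vanishes
    (4 * S ^ 3 + 4 * S ^ 2 + 4 * S + 1 = 0 →
      J μ w0 w1 x0 (fun ω => S * x0 ω) (fun ω => S * x1 w0 x0 (fun ω' => S * x0 ω') ω) = 0) ∧
    -- the zero control has cost E[x₀²]
    J μ w0 w1 x0 (fun _ => 0) (fun _ => 0) = ∫ ω, (x0 ω) ^ 2 ∂μ ∧
    -- hence the feedback control strictly beats the zero control when E[x₀²] > 0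
    (4 * S ^ 3 + 4 * S ^ 2 + 4 * S + 1 = 0 → 0 < ∫ ω, (x0 ω) ^ 2 ∂μ →
      J μ w0 w1 x0 (fun ω => S * x0 ω) (fun ω => S * x1 w0 x0 (fun ω' => S * x0 ω') ω)
        < J μ w0 w1 x0 (fun _ => 0) (fun _ => 0)) :=
  statement_0_general μ w0 w1 x0 hw0m hw1m hx0m hindw hindx hw0mean hw1mean hw0var hw1var S

end SLQExample
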